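/- Let (Q^S, Q^H) be bivariate standard normal with correlation θ ∈ (0,1). Then for all real thresholds τ^S, τ^H: P(Q^S > τ^S | Q^H > τ^H) > P(Q^S > τ^S | Q^H = τ^H), i.e., Φ̄₂(τ^S, τ^H; θ)/Φ̄(τ^H) > Φ̄((τ^S − θτ^H)/√(1−θ²)). -/

import Mathlib

open Real MeasureTheory Set Matrix

/-- standard normal density -/
noncomputable def phi (x : ℝ) : ℝ := Real.exp (-x^2/2) / Real.sqrt (2*Real.pi)

/-- standard normal CDF -/
noncomputable def Phi (x : ℝ) : ℝ := ∫ t in Set.Iic x, phi t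

/-- standard normal survival function -/
noncomputable def PhiBar (x : ℝ) : ℝ := ∫ t in Set.Ioi x, phi t

/-- standard bivariate normal density with correlation ρ -/
noncomputable def phi2 (x y ρ : ℝ) : ℝ :=
  Real.exp (-(x^2 - 2*ρ*x*y + y^2)/(2*(1-ρ^2))) / (2*Real.pi*Real.sqrt (1-ρ^2))

/-- standard bivariate normal CDF with correlation ρ -/
noncomputable def Phi2 (a b ρ : ℝ) : ℝ := ∫ x in Set.Iic a, ∫ y in Set.Iic b, phi2 x y ρ

/-- standard bivariate normal joint survival function with correlation ρ -/
noncomputable def PhiBar2 (a b ρ : ℝ) : ℝ := ∫ x in Set.Ioi a, ∫ y in Set.Ioi b, phi2 x y ρ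

/-- covariance matrix of (Q, Q^S, Q^H) -/
noncomputable def covM (θS θH θ : ℝ) : Matrix (Fin 3) (Fin 3) ℝ :=
  !![1, θS, θH; θS, 1, θ; θH, θ, 1]

/-- trivariate normal density of (Q, Q^S, Q^H) with zero means, unit variances and
correlations θS = Corr(Q,Q^S), θH = Corr(Q,Q^H), θ = Corr(Q^S,Q^H) -/
noncomputable def pdf3 (θS θH θ : ℝ) (v : Fin 3 → ℝ) : ℝ :=
  Real.exp (-(v ⬝ᵥ ((covM θS θH θ)⁻¹ *ᵥ v))/2) /
    Real.sqrt ((2*Real.pi)^3 * (covM θS θH θ).det)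

/-! Integrating out `Q^S` first gives
`Φ̄₂(τ^S, τ^H; θ) = ∫_{y > τ^H} φ(y) Φ̄((τ^S - θ y) / √(1 - θ²)) dy`.
For `θ > 0` the second factor is strictly larger for every `y > τ^H` than at `y = τ^H`, so the
integral strictly exceeds `Φ̄((τ^S - θ τ^H) / √(1 - θ²)) Φ̄(τ^H)`. -/

open ProbabilityTheory

lemma setIntegral_pos_of_pos {X : Type*} [MeasurableSpace X] {μ : Measure X} {f : X → ℝ}
    {s : Set X} (hs : MeasurableSet s) (hμs : μ s ≠ 0) (hf : IntegrableOn f s μ)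
    (hpos : ∀ x ∈ s, 0 < f x) : 0 < ∫ x in s, f x ∂μ := by
  rw [setIntegral_pos_iff_support_of_nonneg_ae
    ((ae_restrict_iff' hs).2 (ae_of_all _ fun x hx => (hpos x hx).le)) hf]
  exact lt_of_lt_of_le (pos_iff_ne_zero.2 hμs)
    (measure_mono fun x hx => ⟨(hpos x hx).ne', hx⟩)

lemma phi_eq_gaussianPDFReal : phi = gaussianPDFReal 0 1 := by
  ext x
  simp [phi, gaussianPDFReal, div_eq_inv_mul]

lemma phi_pos (x : ℝ) : 0 < phi x := by
  rw [phi_eq_gaussianPDFReal]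
  exact gaussianPDFReal_pos _ _ _ one_ne_zero

lemma integrable_phi : Integrable phi :=
  phi_eq_gaussianPDFReal ▸ integrable_gaussianPDFReal 0 1

lemma integral_phi : ∫ x, phi x = 1 := by
  rw [phi_eq_gaussianPDFReal]
  exact integral_gaussianPDFReal_eq_one 0 one_ne_zero

lemma phiBar_pos (x : ℝ) : 0 < PhiBar x :=
  setIntegral_pos_of_pos measurableSet_Ioi (by simp) integrable_phi.integrableOn
    fun t _ => phi_pos t

lemma phiBar_le_one (x : ℝ) : PhiBar x ≤ 1 :=
  integral_phi ▸ setIntegral_le_integral integrable_phi (ae_of_all _ fun t => (phi_pos t).le)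

lemma phiBar_strictAnti : StrictAnti PhiBar := by
  intro a b hab
  have hsplit : PhiBar a = (∫ t in Ioc a b, phi t) + PhiBar b := by
    rw [PhiBar, PhiBar, ← setIntegral_union Ioc_disjoint_Ioi_same measurableSet_Ioi
      integrable_phi.integrableOn integrable_phi.integrableOn, Ioc_union_Ioi_eq_Ioi hab.le]
  have hIoc : 0 < ∫ t in Ioc a b, phi t :=
    setIntegral_pos_of_pos measurableSet_Ioc (by simp [hab]) integrable_phi.integrableOn
      fun t _ => phi_pos t
  linarith

lemma setIntegral_Ioi_phi_div {σ : ℝ} (hσ : 0 < σ) (a c : ℝ) :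
    ∫ x in Ioi a, phi ((x - c) / σ) = σ * PhiBar ((a - c) / σ) := by
  have hshift := (measurePreserving_sub_right volume c).setIntegral_preimage_emb
    (measurableEmbedding_subRight c) (fun x => phi (x / σ)) (Ioi (a - c))
  rw [preimage_sub_const_Ioi, sub_add_cancel] at hshift
  simp_rw [hshift, div_eq_mul_inv, integral_comp_mul_right_Ioi (fun x => phi x) _ (inv_pos.2 hσ),
    inv_inv, smul_eq_mul, PhiBar]

lemma one_sub_sq_pos_of_abs_lt_one {θ : ℝ} (hθ : |θ| < 1) : 0 < 1 - θ ^ 2 := by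
  nlinarith [sq_abs θ, abs_nonneg θ]

-- Completing the square in `x`: given `Q^H = y`, `Q^S` is `N(θ y, 1 - θ²)`.
lemma phi2_eq_phi_mul_phi {θ : ℝ} (hθ : |θ| < 1) (x y : ℝ) :
    phi2 x y θ = phi y * (phi ((x - θ * y) / √(1 - θ ^ 2)) / √(1 - θ ^ 2)) := by
  have hs := one_sub_sq_pos_of_abs_lt_one hθ
  have hexp : -(x ^ 2 - 2 * θ * x * y + y ^ 2) / (2 * (1 - θ ^ 2))
      = -y ^ 2 / 2 + -((x - θ * y) / √(1 - θ ^ 2)) ^ 2 / 2 := by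
    rw [div_pow, Real.sq_sqrt hs.le]
    field_simp
    ring
  have h2π : √(2 * π) * √(2 * π) = 2 * π := Real.mul_self_sqrt (by positivity)
  rw [phi2, phi, phi, hexp, Real.exp_add, div_div, div_mul_div_comm, ← mul_assoc, h2π]

lemma integrable_phi2 {θ : ℝ} (hθ : |θ| < 1) :
    Integrable (fun p : ℝ × ℝ => phi2 p.1 p.2 θ) := by
  have hs := one_sub_sq_pos_of_abs_lt_one hθ
  set a := 1 / (2 * (1 + |θ|))
  have ha : 0 < a := by positivity
  have hg : Integrable (fun p : ℝ × ℝ =>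
      Real.exp (-a * p.1 ^ 2) * Real.exp (-a * p.2 ^ 2) / (2 * π * √(1 - θ ^ 2))) :=
    ((integrable_exp_neg_mul_sq ha).mul_prod (integrable_exp_neg_mul_sq ha)).div_const _
  refine hg.mono' (by unfold phi2; fun_prop) (ae_of_all _ fun ⟨x, y⟩ => ?_)
  -- `x² - 2θxy + y² ≥ (1 - |θ|)(x² + y²)` and `1 - θ² = (1 - |θ|)(1 + |θ|)`
  have hquad : (1 - |θ|) * (x ^ 2 + y ^ 2) ≤ x ^ 2 - 2 * θ * x * y + y ^ 2 := by
    nlinarith [abs_mul_abs_self θ, abs_nonneg θ, sq_nonneg (|x| - |y|), abs_mul_abs_self x,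
      abs_mul_abs_self y, abs_mul θ (x * y), abs_mul x y, le_abs_self (θ * (x * y))]
  have hexp : -(x ^ 2 - 2 * θ * x * y + y ^ 2) / (2 * (1 - θ ^ 2)) ≤ -a * x ^ 2 + -a * y ^ 2 := by
    rw [div_le_iff₀ (by positivity)]
    have : (-a * x ^ 2 + -a * y ^ 2) * (2 * (1 - θ ^ 2)) = -((1 - |θ|) * (x ^ 2 + y ^ 2)) := by
      rw [← sq_abs θ]; simp only [a]; field_simp; ring
    linarith
  rw [Real.norm_of_nonneg (by unfold phi2; positivity), phi2, ← Real.exp_add]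
  gcongr

lemma phiBar2_eq_setIntegral {θ : ℝ} (hθ : |θ| < 1) (a b : ℝ) :
    PhiBar2 a b θ = ∫ y in Ioi b, phi y * PhiBar ((a - θ * y) / √(1 - θ ^ 2)) := by
  have hσ : 0 < √(1 - θ ^ 2) := Real.sqrt_pos.2 (one_sub_sq_pos_of_abs_lt_one hθ)
  have hint : Integrable (fun p : ℝ × ℝ => phi2 p.1 p.2 θ)
      ((volume.restrict (Ioi a)).prod (volume.restrict (Ioi b))) := by
    rw [Measure.prod_restrict]
    exact (integrable_phi2 hθ).restrict
  rw [PhiBar2, integral_integral_swap hint]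
  refine setIntegral_congr_fun measurableSet_Ioi fun y _ => ?_
  simp_rw [phi2_eq_phi_mul_phi hθ, integral_const_mul, integral_div,
    setIntegral_Ioi_phi_div hσ, mul_div_cancel_left₀ _ hσ.ne']

lemma integrable_phi_mul_phiBar_comp {f : ℝ → ℝ} (hf : Measurable f) :
    Integrable fun y => phi y * PhiBar (f y) :=
  integrable_phi.mul_bdd (phiBar_strictAnti.antitone.measurable.comp hf).aestronglyMeasurable
    (ae_of_all _ fun y => by
      rw [Real.norm_of_nonneg (phiBar_pos _).le]
      exact phiBar_le_one _)

lemma mul_phiBar_lt_setIntegral_phi_mul {g : ℝ → ℝ} {b c : ℝ}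
    (hg : IntegrableOn (fun y => phi y * g y) (Ioi b)) (hlt : ∀ y ∈ Ioi b, c < g y) :
    c * PhiBar b < ∫ y in Ioi b, phi y * g y := by
  have hc : ∫ y in Ioi b, phi y * c = c * PhiBar b := by
    rw [integral_mul_const, mul_comm, PhiBar]
  rw [← hc, ← sub_pos, ← integral_sub hg (integrable_phi.integrableOn.mul_const c)]
  exact setIntegral_pos_of_pos measurableSet_Ioi (by simp) (hg.sub
    (integrable_phi.integrableOn.mul_const c)) fun y hy => by
      rw [← mul_sub]
      exact mul_pos (phi_pos y) (sub_pos.2 (hlt y hy))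

/-- P(Q^S > τ^S | Q^H > τ^H) > P(Q^S > τ^S | Q^H = τ^H) for a bivariate
standard normal pair with correlation θ ∈ (0,1). -/
theorem tail_cond_gt_point_cond (θ τS τH : ℝ) (hθ : θ ∈ Set.Ioo (0 : ℝ) 1) :
    PhiBar2 τS τH θ / PhiBar τH > PhiBar ((τS - θ*τH) / Real.sqrt (1 - θ^2)) := by
  have hθ_abs : |θ| < 1 := abs_lt.2 ⟨by linarith [hθ.1], hθ.2⟩
  have hσ : 0 < √(1 - θ ^ 2) := Real.sqrt_pos.2 (one_sub_sq_pos_of_abs_lt_one hθ_abs)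
  rw [gt_iff_lt, lt_div_iff₀ (phiBar_pos τH), phiBar2_eq_setIntegral hθ_abs]
  refine mul_phiBar_lt_setIntegral_phi_mul
    (integrable_phi_mul_phiBar_comp (by fun_prop)).integrableOn fun y (hy : τH < y) => ?_
  exact phiBar_strictAnti (div_lt_div_of_pos_right (by nlinarith [hθ.1]) hσ)
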